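/- Let ξ, φ₁, …, φ_R be vectors in a complex inner product space. Then ∑_{r=1}^R |⟨ξ, φ_r⟩|² ≤ ‖ξ‖² · max_{1 ≤ r ≤ R} ∑_{s=1}^R |⟨φ_r, φ_s⟩|. -/

import Mathlib

/-!
Put `a r = ⟪ξ, φ r⟫` and `v = ∑ r, conj (a r) • φ r`, so that `⟪ξ, v⟫ = ∑ r, ‖a r‖ ^ 2 =: S`.
Cauchy–Schwarz gives `S ≤ ‖ξ‖ ‖v‖`, and expanding `‖v‖ ^ 2` as a double sum and applying
`|a r| |a s| ≤ (|a r| ^ 2 + |a s| ^ 2) / 2` (a Schur test for the symmetric kernel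
`‖⟪φ r, φ s⟫‖`) gives `‖v‖ ^ 2 ≤ S · max_r ∑ s, ‖⟪φ r, φ s⟫‖`. Dividing `S ^ 2 ≤ ‖ξ‖ ^ 2 ‖v‖ ^ 2`
by `S` concludes.
-/

open Finset
open scoped InnerProductSpace

section
variable {ι : Type*} [Fintype ι]

theorem sum_sum_mul_mul_le_of_symm (x : ι → ℝ) (K : ι → ι → ℝ) {M : ℝ}
    (hK_symm : ∀ r s, K r s = K s r) (hK_nonneg : ∀ r s, 0 ≤ K r s)
    (hM : ∀ r, ∑ s, K r s ≤ M) :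
    ∑ r, ∑ s, x r * x s * K r s ≤ M * ∑ r, x r ^ 2 := by
  have amgm : ∀ r s, x r * x s * K r s ≤ (x r ^ 2 * K r s + x s ^ 2 * K s r) / 2 := by
    intro r s
    rw [← hK_symm r s]
    nlinarith [mul_nonneg (sq_nonneg (x r - x s)) (hK_nonneg r s)]
  calc ∑ r, ∑ s, x r * x s * K r s
      ≤ ∑ r, ∑ s, (x r ^ 2 * K r s + x s ^ 2 * K s r) / 2 := by
        gcongr with r _ s _; exact amgm r s
    _ = ∑ r, x r ^ 2 * ∑ s, K r s := by
        simp only [add_div, sum_add_distrib, mul_sum]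
        rw [sum_comm (f := fun r s => x s ^ 2 * K s r / 2), ← sum_add_distrib]
        refine sum_congr rfl fun r _ => ?_
        rw [← sum_add_distrib]
        exact sum_congr rfl fun s _ => by ring
    _ ≤ ∑ r, x r ^ 2 * M := by gcongr with r; exact hM r
    _ = M * ∑ r, x r ^ 2 := by rw [mul_sum]; simp only [mul_comm]

variable {𝕜 E : Type*} [RCLike 𝕜] [NormedAddCommGroup E] [InnerProductSpace 𝕜 E]

theorem norm_sum_smul_sq_le (c : ι → 𝕜) (φ : ι → E) :
    ‖∑ r, c r • φ r‖ ^ 2 ≤ ∑ r, ∑ s, ‖c r‖ * ‖c s‖ * ‖⟪φ r, φ s⟫_𝕜‖ := by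
  have expand : ⟪∑ r, c r • φ r, ∑ s, c s • φ s⟫_𝕜 =
      ∑ r, ∑ s, starRingEnd 𝕜 (c r) * (c s * ⟪φ r, φ s⟫_𝕜) := by
    rw [sum_inner]
    refine sum_congr rfl fun r _ => ?_
    rw [inner_smul_left, inner_sum, mul_sum]
    simp only [inner_smul_right]
  calc ‖∑ r, c r • φ r‖ ^ 2
      = RCLike.re ⟪∑ r, c r • φ r, ∑ s, c s • φ s⟫_𝕜 := norm_sq_eq_re_inner _
    _ ≤ ‖∑ r, ∑ s, starRingEnd 𝕜 (c r) * (c s * ⟪φ r, φ s⟫_𝕜)‖ := expand ▸ RCLike.re_le_norm _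
    _ ≤ ∑ r, ∑ s, ‖starRingEnd 𝕜 (c r) * (c s * ⟪φ r, φ s⟫_𝕜)‖ :=
        (norm_sum_le _ _).trans (sum_le_sum fun r _ => norm_sum_le _ _)
    _ = ∑ r, ∑ s, ‖c r‖ * ‖c s‖ * ‖⟪φ r, φ s⟫_𝕜‖ := by
        simp only [norm_mul, RCLike.norm_conj, mul_assoc]

theorem norm_sum_smul_sq_le_of_row_sum_le (c : ι → 𝕜) (φ : ι → E) {M : ℝ}
    (hM : ∀ r, ∑ s, ‖⟪φ r, φ s⟫_𝕜‖ ≤ M) :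
    ‖∑ r, c r • φ r‖ ^ 2 ≤ M * ∑ r, ‖c r‖ ^ 2 :=
  (norm_sum_smul_sq_le c φ).trans <|
    sum_sum_mul_mul_le_of_symm (fun r => ‖c r‖) (fun r s => ‖⟪φ r, φ s⟫_𝕜‖)
      (fun r s => norm_inner_symm (φ r) (φ s)) (fun _ _ => norm_nonneg _) hM

theorem sum_norm_inner_sq_le_of_norm_sum_smul_sq_le (φ : ι → E) {M : ℝ} (hM_nonneg : 0 ≤ M)
    (hM : ∀ c : ι → 𝕜, ‖∑ r, c r • φ r‖ ^ 2 ≤ M * ∑ r, ‖c r‖ ^ 2) (ξ : E) :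
    ∑ r, ‖⟪ξ, φ r⟫_𝕜‖ ^ 2 ≤ M * ‖ξ‖ ^ 2 := by
  set S := ∑ r, ‖⟪ξ, φ r⟫_𝕜‖ ^ 2
  set v := ∑ r, ⟪φ r, ξ⟫_𝕜 • φ r
  have inner_v : ⟪ξ, v⟫_𝕜 = S := by
    simp only [v, S, inner_sum, inner_smul_right]
    push_cast
    refine sum_congr rfl fun r _ => ?_
    rw [← inner_conj_symm (φ r) ξ, RCLike.conj_mul]
  have S_nonneg : 0 ≤ S := sum_nonneg fun _ _ => sq_nonneg _
  have cauchy_schwarz : S ≤ ‖ξ‖ * ‖v‖ := by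
    simpa [inner_v, abs_of_nonneg S_nonneg] using norm_inner_le_norm (𝕜 := 𝕜) ξ v
  have norm_v : ‖v‖ ^ 2 ≤ M * S := by
    simpa only [S, norm_inner_symm] using hM fun r => ⟪φ r, ξ⟫_𝕜
  rcases S_nonneg.eq_or_lt with hS | hS
  · rw [← hS]; positivity
  · refine le_of_mul_le_mul_left ?_ hS
    calc S * S ≤ (‖ξ‖ * ‖v‖) ^ 2 := by nlinarith
      _ ≤ S * (M * ‖ξ‖ ^ 2) := by nlinarith [sq_nonneg ‖ξ‖]

end

open scoped InnerProductSpace in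
theorem halasz_montgomery_second {E : Type*} [NormedAddCommGroup E] [InnerProductSpace ℂ E]
    (R : ℕ) (hR : (Finset.univ : Finset (Fin R)).Nonempty) (ξ : E) (φ : Fin R → E) :
    ∑ r : Fin R, ‖⟪ξ, φ r⟫_ℂ‖ ^ 2 ≤
      ‖ξ‖ ^ 2 * Finset.univ.sup' hR (fun r => ∑ s : Fin R, ‖⟪φ r, φ s⟫_ℂ‖) := by
  set M := univ.sup' hR fun r => ∑ s, ‖⟪φ r, φ s⟫_ℂ‖
  have row_sum_le : ∀ r, ∑ s, ‖⟪φ r, φ s⟫_ℂ‖ ≤ M := fun r =>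
    le_sup' (fun r => ∑ s, ‖⟪φ r, φ s⟫_ℂ‖) (mem_univ r)
  have M_nonneg : 0 ≤ M := (sum_nonneg fun _ _ => norm_nonneg _).trans (row_sum_le hR.choose)
  rw [mul_comm]
  exact sum_norm_inner_sq_le_of_norm_sum_smul_sq_le φ M_nonneg
    (fun c => norm_sum_smul_sq_le_of_row_sum_le c φ row_sum_le) ξ
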